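/- arXiv:1505.05931 — 7 statements merged into one kernel-verified Lean document; each statement's English description precedes it below -/
import Mathlib

section
/- If A ∈ ℂ^{N×N} satisfies σ_ε(A) = σ(A) + B(0, ε) for all ε > 0, then A is normal. -/
/-!
By hypothesis `‖(z - A)⁻¹‖ ≤ 1 / dist(z, σ(A))`, so near an eigenvalue `μ` we have
`‖(z - A) x‖ ≥ |z - μ| ‖x‖` for every `x`. For an eigenvector `v`, testing this at
`z = μ + s ⟪v, (A - μ) y⟫` on `x = v + t y` and letting `t → 0` gives `⟪v, (A - μ) y⟫ = 0`,
i.e. `A* v = conj μ • v`. Hence `ker (A - μ)² = ker (A - μ)`, so the eigenspaces of `A` span,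
and `A A*` and `A* A` agree on each of them.
-/

open Matrix

/-- The operator norm of a matrix, induced by the Euclidean norm. -/
noncomputable def opNorm {n : Type*} [Fintype n] [DecidableEq n]
    (A : Matrix n n ℂ) : ℝ :=
  ‖Matrix.toEuclideanCLM (𝕜 := ℂ) A‖

open Filter Topology ComplexConjugate
open scoped InnerProductSpace

theorem Module.End.maxGenEigenspace_eq_eigenspace_of_ker_sq {R M : Type*} [CommRing R]
    [AddCommGroup M] [Module R M] (f : Module.End R M) (μ : R)
    (h : ∀ x, (f - μ • 1) ((f - μ • 1) x) = 0 → (f - μ • 1) x = 0) :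
    f.maxGenEigenspace μ = f.eigenspace μ := by
  refine le_antisymm (fun m hm => ?_) Module.End.eigenspace_le_maxGenEigenspace
  obtain ⟨k, hk⟩ := (f.mem_maxGenEigenspace μ m).1 hm
  rw [Module.End.mem_eigenspace_iff, ← sub_eq_zero]
  clear hm
  induction k generalizing m with
  | zero => simp_all
  | succ k ih =>
    rw [pow_succ, Module.End.mul_apply] at hk
    exact h m (ih _ hk)

section

variable {E : Type*} [NormedAddCommGroup E] [InnerProductSpace ℂ E]

theorem two_mul_re_inner_le_of_norm_le_norm_sub {p q : E} (h : ‖p‖ ≤ ‖p - q‖) :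
    2 * RCLike.re ⟪p, q⟫_ℂ ≤ ‖q‖ ^ 2 := by
  have := pow_le_pow_left₀ (norm_nonneg p) h 2
  rw [norm_sub_sq (𝕜 := ℂ)] at this
  linarith

theorem re_conj_mul_inner_nonpos_of_norm_le (f : E →ₗ[ℂ] E) {μ z : ℂ} {v : E}
    (hv : f v = μ • v) (hz : ∀ x, ‖z - μ‖ * ‖x‖ ≤ ‖z • x - f x‖) (y : E) :
    (conj (z - μ) * ⟪v, f y - μ • y⟫_ℂ).re ≤ 0 := by
  set w := z - μ
  set u := f y - μ • y
  have hscaled : ∀ t : ℝ, 0 < t →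
      2 * (conj w * ⟪v, u⟫_ℂ).re ≤ t * (‖u‖ ^ 2 - 2 * (conj w * ⟪y, u⟫_ℂ).re) := by
    intro t ht
    have hx : z • (v + (t : ℂ) • y) - f (v + (t : ℂ) • y)
        = w • (v + (t : ℂ) • y) - (t : ℂ) • u := by
      simp only [map_add, map_smul, hv, u, w]
      module
    have hnorm := hz (v + (t : ℂ) • y)
    rw [hx, ← norm_smul] at hnorm
    have hinner : ⟪w • (v + (t : ℂ) • y), (t : ℂ) • u⟫_ℂ
        = (t : ℂ) * (conj w * ⟪v, u⟫_ℂ) + ((t * t : ℝ) : ℂ) * (conj w * ⟪y, u⟫_ℂ) := by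
      simp only [inner_smul_left, inner_smul_right, inner_add_left, Complex.conj_ofReal]
      push_cast
      ring
    have := two_mul_re_inner_le_of_norm_le_norm_sub hnorm
    rw [hinner, map_add, RCLike.re_to_complex, Complex.re_ofReal_mul, RCLike.re_to_complex,
      Complex.re_ofReal_mul, norm_smul, Complex.norm_real, Real.norm_of_nonneg ht.le] at this
    refine le_of_mul_le_mul_left ?_ ht
    nlinarith
  have hlim : Tendsto (fun t : ℝ => t * (‖u‖ ^ 2 - 2 * (conj w * ⟪y, u⟫_ℂ).re))
      (𝓝[>] 0) (𝓝 0) :=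
    tendsto_nhdsWithin_of_tendsto_nhds (Continuous.tendsto' (by fun_prop) _ _ (by simp))
  linarith [ge_of_tendsto hlim (eventually_nhdsWithin_of_forall hscaled)]

theorem inner_sub_smul_eq_zero_of_eventually_norm_le (f : E →ₗ[ℂ] E) {μ : ℂ} {v : E}
    (hv : f v = μ • v) (hf : ∀ᶠ z in 𝓝 μ, ∀ x, ‖z - μ‖ * ‖x‖ ≤ ‖z • x - f x‖) (y : E) :
    ⟪v, f y - μ • y⟫_ℂ = 0 := by
  set a := ⟪v, f y - μ • y⟫_ℂ
  have hlim : Tendsto (fun s : ℝ => μ + s * a) (𝓝[>] 0) (𝓝 μ) :=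
    tendsto_nhdsWithin_of_tendsto_nhds (Continuous.tendsto' (by fun_prop) _ _ (by simp))
  obtain ⟨s, hz, hs⟩ := ((hlim.eventually hf).and self_mem_nhdsWithin).exists
  have hre := re_conj_mul_inner_nonpos_of_norm_le f hv hz y
  rw [add_sub_cancel_left, map_mul (starRingEnd ℂ), Complex.conj_ofReal, mul_assoc,
    Complex.conj_mul', ← Complex.ofReal_pow, ← Complex.ofReal_mul, Complex.ofReal_re] at hre
  have : ‖a‖ ^ 2 ≤ 0 := nonpos_of_mul_nonpos_right hre hs
  simpa using this

variable [CompleteSpace E]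

theorem ContinuousLinearMap.adjoint_apply_eq_of_eventually_norm_le (T : E →L[ℂ] E) {μ : ℂ}
    {v : E} (hv : T v = μ • v) (hT : ∀ᶠ z in 𝓝 μ, ∀ x, ‖z - μ‖ * ‖x‖ ≤ ‖z • x - T x‖) :
    adjoint T v = conj μ • v := by
  refine ext_inner_right ℂ fun y => ?_
  rw [adjoint_inner_left, inner_smul_left, Complex.conj_conj, ← sub_eq_zero, ← inner_smul_right,
    ← inner_sub_right]
  exact inner_sub_smul_eq_zero_of_eventually_norm_le (T : E →ₗ[ℂ] E) hv hT y

theorem ContinuousLinearMap.isStarNormal_of_adjoint_apply_eq [FiniteDimensional ℂ E]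
    (T : E →L[ℂ] E) (hT : ∀ (μ : ℂ) (v : E), T v = μ • v → adjoint T v = conj μ • v) :
    IsStarNormal T := by
  let f : Module.End ℂ E := T
  have hss : ∀ μ, f.maxGenEigenspace μ = f.eigenspace μ := fun μ =>
    f.maxGenEigenspace_eq_eigenspace_of_ker_sq μ fun x hx => by
      set w := T x - μ • x
      have hw : adjoint T w = conj μ • w := hT μ w (sub_eq_zero.1 hx)
      rw [← inner_self_eq_zero (𝕜 := ℂ)]
      calc ⟪w, w⟫_ℂ = ⟪w, T x - μ • x⟫_ℂ := rfl
        _ = ⟪w, T x⟫_ℂ - μ * ⟪w, x⟫_ℂ := by rw [inner_sub_right, inner_smul_right]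
        _ = 0 := by rw [← adjoint_inner_left, hw, inner_smul_left, Complex.conj_conj, sub_self]
  have htop : ⨆ μ, f.eigenspace μ = ⊤ := by
    simpa only [hss] using Module.End.iSup_maxGenEigenspace_eq_top f
  rw [isStarNormal_iff, commute_iff_eq, star_eq_adjoint]
  ext x
  refine Submodule.iSup_induction _ (motive := fun x => adjoint T (T x) = T (adjoint T x))
    (htop ▸ Submodule.mem_top : x ∈ ⨆ μ, f.eigenspace μ) ?_ (by simp) ?_
  · intro μ v hv
    have hv : T v = μ • v := Module.End.mem_eigenspace_iff.1 hv
    simp [hv, hT μ v hv, smul_smul, mul_comm]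
  · intro x y hx hy
    simp [hx, hy]

end

theorem Set.Finite.eventually_forall_dist_le {X : Type*} [MetricSpace X] {S : Set X}
    (hS : S.Finite) (μ : X) : ∀ᶠ z in 𝓝 μ, ∀ ν ∈ S, dist z μ ≤ dist z ν := by
  refine hS.eventually_all.2 fun ν _ => ?_
  rcases eq_or_ne ν μ with rfl | hne
  · exact Eventually.of_forall fun _ => le_rfl
  · have hlim : ∀ w : X, Tendsto (fun z => dist z w) (𝓝 μ) (𝓝 (dist μ w)) := fun w =>
      (continuous_id.dist continuous_const).tendsto μ
    exact ((hlim μ).eventually_lt (hlim ν) (by simpa using dist_pos.2 hne.symm)).mono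
      fun _ => le_of_lt

namespace Matrix

variable {n : Type*} [Fintype n] [DecidableEq n]

def pseudospectrum (A : Matrix n n ℂ) (ε : ℝ) : Set ℂ :=
  {z | ¬ IsUnit (z • (1 : Matrix n n ℂ) - A) ∨ opNorm ((z • (1 : Matrix n n ℂ) - A)⁻¹) > 1 / ε}

theorem norm_le_opNorm_inv_mul {M : Matrix n n ℂ} (hM : IsUnit M)
    (x : EuclideanSpace ℂ n) : ‖x‖ ≤ opNorm M⁻¹ * ‖toEuclideanCLM (𝕜 := ℂ) M x‖ := by
  calc ‖x‖ = ‖toEuclideanCLM (𝕜 := ℂ) (M⁻¹ * M) x‖ := by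
        rw [nonsing_inv_mul _ ((isUnit_iff_isUnit_det M).1 hM), map_one]
        rfl
    _ = ‖toEuclideanCLM (𝕜 := ℂ) M⁻¹ (toEuclideanCLM (𝕜 := ℂ) M x)‖ := by
        rw [map_mul]
        rfl
    _ ≤ opNorm M⁻¹ * ‖toEuclideanCLM (𝕜 := ℂ) M x‖ := ContinuousLinearMap.le_opNorm _ _

theorem mul_norm_le_of_notMem_pseudospectrum {A : Matrix n n ℂ} {ε : ℝ} {z : ℂ} (hε : 0 < ε)
    (hz : z ∉ A.pseudospectrum ε) (x : EuclideanSpace ℂ n) :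
    ε * ‖x‖ ≤ ‖z • x - toEuclideanCLM (𝕜 := ℂ) A x‖ := by
  simp only [pseudospectrum, Set.mem_ofPred_eq, not_or, not_not, not_lt] at hz
  obtain ⟨hunit, hle⟩ := hz
  have hres : toEuclideanCLM (𝕜 := ℂ) (z • 1 - A) x = z • x - toEuclideanCLM (𝕜 := ℂ) A x := by
    simp
  calc ε * ‖x‖ ≤ ε * (opNorm (z • 1 - A)⁻¹ * ‖z • x - toEuclideanCLM (𝕜 := ℂ) A x‖) := by
        rw [← hres]; gcongr; exact norm_le_opNorm_inv_mul hunit x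
    _ ≤ ε * (1 / ε * ‖z • x - toEuclideanCLM (𝕜 := ℂ) A x‖) := by gcongr
    _ = ‖z • x - toEuclideanCLM (𝕜 := ℂ) A x‖ := by field_simp

end Matrix

theorem normal_of_pseudospectrum_eq_union_of_balls {N : ℕ}
    (A : Matrix (Fin N) (Fin N) ℂ)
    (h : ∀ ε : ℝ, 0 < ε →
      {z : ℂ | ¬ IsUnit (z • (1 : Matrix (Fin N) (Fin N) ℂ) - A) ∨
          opNorm ((z • (1 : Matrix (Fin N) (Fin N) ℂ) - A)⁻¹) > 1 / ε} =
        {z : ℂ | ∃ μ ∈ spectrum ℂ A, dist z μ < ε}) :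
    A * Aᴴ = Aᴴ * A := by
  set T := toEuclideanCLM (𝕜 := ℂ) A
  have hbound (μ : ℂ) : ∀ᶠ z in 𝓝 μ, ∀ x, ‖z - μ‖ * ‖x‖ ≤ ‖z • x - T x‖ := by
    filter_upwards [A.finite_spectrum.eventually_forall_dist_le μ] with z hz x
    rcases eq_or_ne z μ with rfl | hzμ
    · simp
    have hε : 0 < dist z μ := dist_pos.2 hzμ
    rw [← dist_eq_norm]
    refine A.mul_norm_le_of_notMem_pseudospectrum hε (fun hmem => ?_) x
    obtain ⟨ν, hν, hlt⟩ := (h _ hε).le hmem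
    exact (hlt.trans_le (hz ν hν)).false
  have hT : ∀ (μ : ℂ) v, T v = μ • v → ContinuousLinearMap.adjoint T v = conj μ • v :=
    fun μ _ hv => T.adjoint_apply_eq_of_eventually_norm_le hv (hbound μ)
  apply EquivLike.injective (toEuclideanCLM (𝕜 := ℂ) (n := Fin N))
  rw [map_mul, map_mul, ← star_eq_conjTranspose, map_star]
  exact (T.isStarNormal_of_adjoint_apply_eq hT).star_comm_self.symm
end

section
/- (Bauer–Fike) If A ∈ ℂ^{N×N} is diagonalizable, A = VDV⁻¹ with D diagonal, then for every ε > 0, σ_ε(A) ⊆ σ(A) + B(0, ε·κ(V)), where κ(V) = ‖V‖·‖V⁻¹‖. -/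
/-! Writing `A = V D V⁻¹`, the shifted matrix `z - A` is `V (z - D) V⁻¹`, so its inverse is
`V (z - D)⁻¹ V⁻¹` and has norm at most `κ(V) ‖(z - D)⁻¹‖`. For diagonal `D` the inverse
`(z - D)⁻¹` is diagonal with entries `(z - dᵢ)⁻¹`, so its norm is `maxᵢ |z - dᵢ|⁻¹`, i.e. the
reciprocal of the distance from `z` to the spectrum `{dᵢ}`. Hence `‖(z - A)⁻¹‖ > 1/ε` forces some
`|z - dᵢ| < ε κ(V)`. -/

open Matrix

open scoped Matrix.Norms.L2Operator

lemma opNorm_eq_l2_opNorm {n : Type*} [Fintype n] [DecidableEq n] (A : Matrix n n ℂ) :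
    opNorm A = ‖A‖ :=
  rfl

namespace Matrix

variable {n α 𝕜 : Type*} [Fintype n] [DecidableEq n]

section CommRing

variable [CommRing α]

lemma smul_one_sub_conj {V : Matrix n n α} (hV : IsUnit V) (M : Matrix n n α) (z : α) :
    z • 1 - V * M * V⁻¹ = V * (z • 1 - M) * V⁻¹ := by
  rw [mul_sub, sub_mul, mul_smul_one, smul_mul,
    mul_nonsing_inv V ((isUnit_iff_isUnit_det V).mp hV)]

lemma inv_conj {V : Matrix n n α} (hV : IsUnit V) (M : Matrix n n α) :
    (V * M * V⁻¹)⁻¹ = V * M⁻¹ * V⁻¹ := by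
  rw [mul_inv_rev, mul_inv_rev, nonsing_inv_nonsing_inv V ((isUnit_iff_isUnit_det V).mp hV),
    mul_assoc]

end CommRing

section Field

variable [Field α]

lemma spectrum_conj_diagonal {V : Matrix n n α} (hV : IsUnit V) (d : n → α) :
    spectrum α (V * diagonal d * V⁻¹) = Set.range d := by
  have h := spectrum.units_conjugate (R := α) (a := diagonal d) (u := hV.unit)
  rwa [coe_units_inv, hV.unit_spec, spectrum_diagonal] at h

lemma smul_one_sub_diagonal_inv {d : n → α} {z : α} (hz : z ∉ Set.range d) :
    (z • 1 - diagonal d)⁻¹ = diagonal fun i => (z - d i)⁻¹ := by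
  have hne : ∀ i, z - d i ≠ 0 := fun i h => hz ⟨i, (sub_eq_zero.mp h).symm⟩
  refine inv_eq_left_inv ?_
  rw [smul_one_eq_diagonal, diagonal_sub, diagonal_mul_diagonal]
  exact diagonal_eq_one.mpr <| funext fun i => inv_mul_cancel₀ (hne i)

end Field

variable [RCLike 𝕜]

lemma l2_opNorm_conj_le (V M : Matrix n n 𝕜) : ‖V * M * V⁻¹‖ ≤ ‖V‖ * ‖V⁻¹‖ * ‖M‖ :=
  calc ‖V * M * V⁻¹‖ ≤ ‖V‖ * ‖M‖ * ‖V⁻¹‖ := norm_mul₃_le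
    _ = ‖V‖ * ‖V⁻¹‖ * ‖M‖ := by ring

lemma one_le_l2_opNorm_mul_l2_opNorm_inv [Nonempty n] {V : Matrix n n 𝕜} (hV : IsUnit V) :
    1 ≤ ‖V‖ * ‖V⁻¹‖ :=
  calc (1 : ℝ) = ‖V * V⁻¹‖ := by
        rw [mul_nonsing_inv V ((isUnit_iff_isUnit_det V).mp hV), norm_one]
    _ ≤ ‖V‖ * ‖V⁻¹‖ := norm_mul_le V V⁻¹

lemma l2_opNorm_inv_smul_one_sub_conj_diagonal_le {V : Matrix n n 𝕜} (hV : IsUnit V)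
    {d : n → 𝕜} {z : 𝕜} (hz : z ∉ Set.range d) :
    ‖(z • 1 - V * diagonal d * V⁻¹)⁻¹‖ ≤ ‖V‖ * ‖V⁻¹‖ * ‖fun i => (z - d i)⁻¹‖ := by
  rw [smul_one_sub_conj hV, inv_conj hV, smul_one_sub_diagonal_inv hz, ← l2_opNorm_diagonal]
  exact l2_opNorm_conj_le _ _

end Matrix

lemma exists_dist_lt_of_inv_lt_norm_inv_sub {ι 𝕜 : Type*} [Fintype ι] [NormedField 𝕜]
    {d : ι → 𝕜} {z : 𝕜} {r : ℝ} (hr : 0 < r) (h : r⁻¹ < ‖fun i => (z - d i)⁻¹‖) :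
    ∃ i, dist z (d i) < r := by
  contrapose! h
  refine (pi_norm_le_iff_of_nonneg (inv_nonneg.mpr hr.le)).mpr fun i => ?_
  rw [norm_inv, ← dist_eq_norm]
  exact inv_anti₀ hr (h i)

theorem bauer_fike {N : ℕ} (A V D : Matrix (Fin N) (Fin N) ℂ)
    (hV : IsUnit V) (hD : D.IsDiag) (hA : A = V * D * V⁻¹)
    (ε : ℝ) (hε : 0 < ε) (z : ℂ)
    (hz : ¬ IsUnit (z • (1 : Matrix (Fin N) (Fin N) ℂ) - A) ∨
      opNorm ((z • (1 : Matrix (Fin N) (Fin N) ℂ) - A)⁻¹) > 1 / ε) :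
    ∃ μ ∈ spectrum ℂ A, dist z μ < ε * (opNorm V * opNorm V⁻¹) := by
  simp only [opNorm_eq_l2_opNorm] at hz ⊢
  obtain ⟨d, rfl⟩ : ∃ d, D = diagonal d := ⟨D.diag, hD.diagonal_diag.symm⟩
  have hσ : spectrum ℂ A = Set.range d := hA ▸ spectrum_conj_diagonal hV d
  -- for `N = 0` every matrix is a unit of norm `0`, so `hz` fails
  have : Nonempty (Fin N) := by
    by_contra!
    rcases hz with hz | hz
    · exact hz (isUnit_of_subsingleton _)
    · rw [Subsingleton.elim (z • 1 - A)⁻¹ 0, norm_zero] at hz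
      exact hz.not_gt (one_div_pos.mpr hε)
  have hκ : 0 < ‖V‖ * ‖V⁻¹‖ := one_pos.trans_le (one_le_l2_opNorm_mul_l2_opNorm_inv hV)
  by_cases hzσ : z ∈ spectrum ℂ A
  · exact ⟨z, hzσ, by rw [dist_self]; positivity⟩
  have hunit : IsUnit (z • 1 - A) := by
    rwa [spectrum.mem_iff, Algebra.algebraMap_eq_smul_one, not_not] at hzσ
  have hres : 1 / ε < ‖V‖ * ‖V⁻¹‖ * ‖fun i => (z - d i)⁻¹‖ :=
    (hz.resolve_left (not_not.mpr hunit)).trans_le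
      (hA ▸ l2_opNorm_inv_smul_one_sub_conj_diagonal_le hV (hσ ▸ hzσ))
  obtain ⟨i, hi⟩ := exists_dist_lt_of_inv_lt_norm_inv_sub (d := d) (z := z)
    (r := ε * (‖V‖ * ‖V⁻¹‖)) (by positivity) <| by
    rwa [mul_inv, ← one_div, ← div_eq_mul_inv, div_lt_iff₀ hκ, mul_comm]
  exact ⟨d i, hσ ▸ ⟨i, rfl⟩, hi⟩
end

section
/- Let A ∈ ℂ^{2×2} be diagonalizable with distinct eigenvalues, eigenvector angle θ, and y = |λ₂−λ₁|. Then as ε → 0, r_max/r_min = 1 + (2 cos θ cot θ)·ε/y + O(ε²), where r_max and r_min are the maximum and minimum distances from λ₁ to the boundary of the component of σ_ε(A) containing λ₁. In particular, if A is not normal the ratio exceeds 1 for all sufficiently small ε > 0. -/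
/-!
With `p, q = y² + 4ε² ∓ 4yε/m` the two radicands, rationalizing gives
`y - √p = 4ε(y/m - ε)/(y + √p)` and `√q - y = 4ε(y/m + ε)/(y + √q)`, so the factor `ε` cancels
and `r_max / r_min = (y/m - ε)/(y/m + ε) · (y + √q)/(y + √p)`. In this form first-order
expansions `√p, √q = y ∓ 2ε/m + O(ε²)` suffice, and the first-order terms combine to
`2(1 - m²)/(m y) · ε = 2 cos²θ/(sin θ · y) · ε`. For `θ < π/2` this coefficient is positive,
which pushes the ratio above `1` for small `ε > 0`.
-/

open Asymptotics Filter Topology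

/-- `m` plays the role of `sin θ`, so `4 * y * ε / m` is the paper's `4yε csc θ`. -/
noncomputable def rMax (y m ε : ℝ) : ℝ := (y - √(y ^ 2 + 4 * ε ^ 2 - 4 * y * ε / m)) / 2

noncomputable def rMin (y m ε : ℝ) : ℝ := (√(y ^ 2 + 4 * ε ^ 2 + 4 * y * ε / m) - y) / 2

theorem Real.abs_sqrt_sub_le_div {x a : ℝ} (ha : 0 < a) : |√x - a| ≤ |x - a ^ 2| / a := by
  rw [le_div_iff₀ ha]
  rcases le_or_gt 0 x with hx | hx
  · have hpos : 0 < √x + a := by linarith [Real.sqrt_nonneg x]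
    have h : (√x - a) * (√x + a) = x - a ^ 2 := by linear_combination Real.sq_sqrt hx
    calc |√x - a| * a ≤ |√x - a| * (√x + a) := by gcongr; linarith [Real.sqrt_nonneg x]
      _ = |x - a ^ 2| := by rw [← h, abs_mul, abs_of_pos hpos]
  · rw [Real.sqrt_eq_zero_of_nonpos hx.le, abs_of_neg (by linarith), abs_of_neg (by nlinarith)]
    nlinarith

theorem Asymptotics.IsBigO.sqrt_sub_of_sub_sq {α F : Type*} [Norm F] {l : Filter α} {x L : α → ℝ}
    {g : α → F} {a : ℝ} (ha : 0 < a) (hL : Tendsto L l (𝓝 a))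
    (h : (fun t => x t - L t ^ 2) =O[l] g) : (fun t => √(x t) - L t) =O[l] g := by
  refine IsBigO.trans (IsBigO.of_bound (2 / a) ?_) h
  filter_upwards [hL.eventually (lt_mem_nhds (half_lt_self ha))] with t ht
  rw [Real.norm_eq_abs, Real.norm_eq_abs]
  calc |√(x t) - L t| ≤ |x t - L t ^ 2| / L t := Real.abs_sqrt_sub_le_div (by linarith)
    _ ≤ |x t - L t ^ 2| / (a / 2) := by gcongr
    _ = 2 / a * |x t - L t ^ 2| := by ring

theorem Asymptotics.IsBigO.mul_of_tendsto_left {α F : Type*} [Norm F] {l : Filter α}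
    {f k : α → ℝ} {g : α → F} {c : ℝ} (hk : Tendsto k l (𝓝 c)) (h : f =O[l] g) :
    (fun t => k t * f t) =O[l] g := by
  have hkf : (fun t => k t * f t) =O[l] f := by simpa using (hk.isBigO_one ℝ).mul (isBigO_refl f l)
  exact hkf.trans h

theorem rMax_eq {y m ε : ℝ} (hy : 0 < y) (hp : 0 ≤ y ^ 2 + 4 * ε ^ 2 - 4 * y * ε / m) :
    rMax y m ε = 2 * ε * (y / m - ε) / (y + √(y ^ 2 + 4 * ε ^ 2 - 4 * y * ε / m)) := by
  have hpos : 0 < y + √(y ^ 2 + 4 * ε ^ 2 - 4 * y * ε / m) := by positivity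
  rw [rMax, eq_div_iff hpos.ne']
  linear_combination (-1 / 2 : ℝ) * Real.sq_sqrt hp

theorem rMin_eq {y m ε : ℝ} (hy : 0 < y) (hq : 0 ≤ y ^ 2 + 4 * ε ^ 2 + 4 * y * ε / m) :
    rMin y m ε = 2 * ε * (y / m + ε) / (y + √(y ^ 2 + 4 * ε ^ 2 + 4 * y * ε / m)) := by
  have hpos : 0 < y + √(y ^ 2 + 4 * ε ^ 2 + 4 * y * ε / m) := by positivity
  rw [rMin, eq_div_iff hpos.ne']
  linear_combination (1 / 2 : ℝ) * Real.sq_sqrt hq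

theorem rMax_div_rMin_eq {y m ε : ℝ} (hy : 0 < y) (hε : ε ≠ 0)
    (hp : 0 ≤ y ^ 2 + 4 * ε ^ 2 - 4 * y * ε / m) (hq : 0 ≤ y ^ 2 + 4 * ε ^ 2 + 4 * y * ε / m) :
    rMax y m ε / rMin y m ε = (y / m - ε) / (y / m + ε) *
      ((y + √(y ^ 2 + 4 * ε ^ 2 + 4 * y * ε / m)) / (y + √(y ^ 2 + 4 * ε ^ 2 - 4 * y * ε / m))) := by
  have hA : 0 < y + √(y ^ 2 + 4 * ε ^ 2 - 4 * y * ε / m) := by positivity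
  have hB : 0 < y + √(y ^ 2 + 4 * ε ^ 2 + 4 * y * ε / m) := by positivity
  rw [rMax_eq hy hp, rMin_eq hy hq]
  field_simp
theorem isBigO_div_mul_div_sub_affine {y m : ℝ} (hy : 0 < y) (hm : m ≠ 0) {A B : ℝ → ℝ}
    (hA : (fun ε => A ε - (y - 2 / m * ε)) =O[𝓝 0] fun ε => ε ^ 2)
    (hB : (fun ε => B ε - (y + 2 / m * ε)) =O[𝓝 0] fun ε => ε ^ 2) :
    (fun ε => (y / m - ε) / (y / m + ε) * ((y + B ε) / (y + A ε)) -
      (1 + 2 * (1 - m ^ 2) / (m * y) * ε)) =O[𝓝 0] fun ε => ε ^ 2 := by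
  set c := 2 * (1 - m ^ 2) / (m * y) with hc
  have hAy : Tendsto A (𝓝 0) (𝓝 y) := by
    have hsmall := hA.trans_tendsto (Continuous.tendsto' (by fun_prop) 0 0 (by simp))
    simpa using hsmall.add (Continuous.tendsto' (by fun_prop) 0 y (by simp) :
      Tendsto (fun ε : ℝ => y - 2 / m * ε) (𝓝 0) (𝓝 y))
  have hDen : Tendsto (fun ε => (y / m + ε) * (y + A ε)) (𝓝 0) (𝓝 (y / m * (y + y))) :=
    (Continuous.tendsto' (by fun_prop) 0 (y / m) (by simp)).mul (tendsto_const_nhds.add hAy)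
  have hDen0 : y / m * (y + y) ≠ 0 := mul_ne_zero (div_ne_zero hy.ne' hm) (by linarith)
  -- The first-order terms cancel because `c * (y / m) = 2 * (1 / m ^ 2 - 1)`.
  have hNum : (fun ε => (y / m - ε) * (y + B ε) - (1 + c * ε) * ((y / m + ε) * (y + A ε)))
      =O[𝓝 0] fun ε => ε ^ 2 := by
    have hP := (isBigO_refl (fun ε : ℝ => ε ^ 2) (𝓝 0)).mul_of_tendsto_left
      ((by fun_prop : Continuous fun ε : ℝ => 2 * c * (y / m ^ 2 - y + ε / m)).tendsto 0)
    have hB' := hB.mul_of_tendsto_left ((by fun_prop : Continuous fun ε : ℝ => y / m - ε).tendsto 0)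
    have hA' := hA.mul_of_tendsto_left
      ((by fun_prop : Continuous fun ε : ℝ => (1 + c * ε) * (y / m + ε)).tendsto 0)
    refine ((hP.add hB').sub hA').congr_left fun ε => ?_
    rw [hc]
    field_simp
    ring
  refine (hNum.mul_of_tendsto_left (hDen.inv₀ hDen0)).congr' ?_ EventuallyEq.rfl
  filter_upwards [hDen.eventually_ne hDen0] with ε hε
  rw [div_mul_div_comm, div_sub' hε, div_eq_inv_mul]
  ring

theorem isBigO_rMax_div_rMin_sub_affine {y m : ℝ} (hy : 0 < y) (hm : m ≠ 0) :
    (fun ε => rMax y m ε / rMin y m ε - (1 + 2 * (1 - m ^ 2) / (m * y) * ε))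
      =O[𝓝[≠] 0] fun ε => ε ^ 2 := by
  have hp : Tendsto (fun ε => y ^ 2 + 4 * ε ^ 2 - 4 * y * ε / m) (𝓝 0) (𝓝 (y ^ 2)) :=
    Continuous.tendsto' (by fun_prop) 0 _ (by simp)
  have hq : Tendsto (fun ε => y ^ 2 + 4 * ε ^ 2 + 4 * y * ε / m) (𝓝 0) (𝓝 (y ^ 2)) :=
    Continuous.tendsto' (by fun_prop) 0 _ (by simp)
  have hA : (fun ε => √(y ^ 2 + 4 * ε ^ 2 - 4 * y * ε / m) - (y - 2 / m * ε))
      =O[𝓝 0] fun ε => ε ^ 2 :=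
    IsBigO.sqrt_sub_of_sub_sq hy (Continuous.tendsto' (by fun_prop) 0 y (by simp))
      (((isBigO_refl _ _).const_mul_left (4 - 4 / m ^ 2)).congr_left fun ε => by field_simp; ring)
  have hB : (fun ε => √(y ^ 2 + 4 * ε ^ 2 + 4 * y * ε / m) - (y + 2 / m * ε))
      =O[𝓝 0] fun ε => ε ^ 2 :=
    IsBigO.sqrt_sub_of_sub_sq hy (Continuous.tendsto' (by fun_prop) 0 y (by simp))
      (((isBigO_refl _ _).const_mul_left (4 - 4 / m ^ 2)).congr_left fun ε => by field_simp; ring)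
  refine ((isBigO_div_mul_div_sub_affine hy hm hA hB).mono nhdsWithin_le_nhds).congr' ?_
    EventuallyEq.rfl
  filter_upwards [self_mem_nhdsWithin,
    mem_nhdsWithin_of_mem_nhds (hp.eventually (lt_mem_nhds (pow_pos hy 2))),
    mem_nhdsWithin_of_mem_nhds (hq.eventually (lt_mem_nhds (pow_pos hy 2)))] with ε hε hpε hqε
  rw [rMax_div_rMin_eq hy hε hpε.le hqε.le]

theorem eventually_lt_of_isBigO_sub_affine {f : ℝ → ℝ} {a c : ℝ} (hc : 0 < c)
    (h : (fun ε => f ε - (a + c * ε)) =O[𝓝[>] 0] fun ε => ε ^ 2) :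
    ∀ᶠ ε in 𝓝[>] 0, a < f ε := by
  obtain ⟨C, hC, hfC⟩ := h.exists_pos
  have hsmall : ∀ᶠ ε in 𝓝[>] 0, ε < c / C :=
    mem_nhdsWithin_of_mem_nhds (gt_mem_nhds (div_pos hc hC))
  filter_upwards [hfC.bound, hsmall, self_mem_nhdsWithin] with ε hb hεs (hε : 0 < ε)
  rw [Real.norm_eq_abs, Real.norm_of_nonneg (sq_nonneg ε)] at hb
  have hCε : 0 < ε * (c - C * ε) := mul_pos hε (by rw [lt_div_iff₀ hC, mul_comm] at hεs; linarith)
  linarith [neg_abs_le (f ε - (a + c * ε))]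

theorem rmax_div_rmin_asymptotics
    (θ y : ℝ) (hθ : θ ∈ Set.Ioc 0 (Real.pi / 2)) (hy : 0 < y) :
    (fun ε : ℝ =>
        ((y - Real.sqrt (y ^ 2 + 4 * ε ^ 2 - 4 * y * ε / Real.sin θ)) / 2) /
          ((Real.sqrt (y ^ 2 + 4 * ε ^ 2 + 4 * y * ε / Real.sin θ) - y) / 2) -
        (1 + 2 * Real.cos θ * (Real.cos θ / Real.sin θ) * ε / y))
      =O[nhdsWithin 0 (Set.Ioi 0)] (fun ε : ℝ => ε ^ 2) ∧
    (θ ≠ Real.pi / 2 →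
      ∀ᶠ ε : ℝ in nhdsWithin 0 (Set.Ioi 0),
        1 < ((y - Real.sqrt (y ^ 2 + 4 * ε ^ 2 - 4 * y * ε / Real.sin θ)) / 2) /
          ((Real.sqrt (y ^ 2 + 4 * ε ^ 2 + 4 * y * ε / Real.sin θ) - y) / 2)) := by
  obtain ⟨hθ0, hθ2⟩ := hθ
  have hsin : 0 < Real.sin θ := Real.sin_pos_of_pos_of_lt_pi hθ0 (by linarith [Real.pi_pos])
  have hexp : (fun ε => rMax y (Real.sin θ) ε / rMin y (Real.sin θ) ε -
      (1 + 2 * Real.cos θ * (Real.cos θ / Real.sin θ) / y * ε)) =O[𝓝[>] 0] fun ε => ε ^ 2 := by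
    have hcoef : 2 * Real.cos θ * (Real.cos θ / Real.sin θ) / y =
        2 * (1 - Real.sin θ ^ 2) / (Real.sin θ * y) := by
      rw [← Real.cos_sq']
      ring
    rw [hcoef]
    exact (isBigO_rMax_div_rMin_sub_affine hy hsin.ne').mono
      (nhdsWithin_mono _ fun ε hε => ne_of_gt hε)
  refine ⟨hexp.congr_left fun ε => by rw [rMax, rMin]; ring, fun hne => ?_⟩
  have hcos : 0 < Real.cos θ :=
    Real.cos_pos_of_mem_Ioo ⟨by linarith [Real.pi_pos], lt_of_le_of_ne hθ2 hne⟩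
  exact eventually_lt_of_isBigO_sub_affine (by positivity) hexp
end

section
/- Let J be the N×N Jordan block with eigenvalue λ. Then for every ε > 0, the open ball B(λ, (ε(1+ε)^{N−1})^{1/N}) is contained in σ_ε(J). -/
/-!
Perturb `J` by `δ` on the superdiagonal and by `c` in the bottom-left corner. Then `J + E - λ` is a
weighted cyclic shift, with weight `1 + δ` on the superdiagonal and `c` in the corner, so
`(1, u, …, u^(N-1))` is an eigenvector with eigenvalue `λ + (1 + δ) u` as soon as
`c = (1 + δ) u^N`. Taking `u = (z - λ) / (1 + δ)` makes `z` an eigenvalue, with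
`|c| = |z - λ|^N / (1 + δ)^(N-1)`. Since `E` is a diagonal matrix times a permutation matrix,
`‖E‖ ≤ max (δ, |c|)`, and both are below `ε` once `δ < ε` is taken close enough to `ε`.
-/

open Matrix

/-- The N×N Jordan block with eigenvalue `lam`. -/
def jordanBlock (N : ℕ) (lam : ℂ) : Matrix (Fin N) (Fin N) ℂ :=
  Matrix.of fun i j => if (j : ℕ) = i then lam else if (j : ℕ) = (i : ℕ) + 1 then 1 else 0

open Filter Topology
open scoped Matrix.Norms.L2Operator

lemma Matrix.mem_spectrum_of_mulVec_eq_smul {K n : Type*} [Field K] [Fintype n] [DecidableEq n]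
    {A : Matrix n n K} {v : n → K} {μ : K} (hv : v ≠ 0) (h : A *ᵥ v = μ • v) :
    μ ∈ spectrum K A := by
  rw [← Matrix.spectrum_toLin', ← Module.End.hasEigenvalue_iff_mem_spectrum]
  exact Module.End.hasEigenvalue_of_hasEigenvector
    ⟨Module.End.mem_eigenspace_iff.2 (by simpa using h), hv⟩

lemma opNorm_diagonal_mul_permMatrix_le {n : Type*} [Fintype n] [DecidableEq n]
    (d : n → ℂ) (σ : Equiv.Perm n) : opNorm (diagonal d * σ.permMatrix ℂ) ≤ ‖d‖ :=
  calc opNorm (diagonal d * σ.permMatrix ℂ)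
      ≤ ‖diagonal d‖ * ‖σ.permMatrix ℂ‖ := l2_opNorm_mul _ _
    _ ≤ ‖d‖ * 1 := by
        rw [l2_opNorm_diagonal]
        exact mul_le_mul_of_nonneg_left (permMatrix_l2_opNorm_le σ) (norm_nonneg d)
    _ = ‖d‖ := mul_one _

lemma jordanBlock_succ (n : ℕ) (lam : ℂ) :
    jordanBlock (n + 1) lam = lam • 1 +
      diagonal (fun i => if i = Fin.last n then 0 else 1) * (finRotate (n + 1)).permMatrix ℂ := by
  ext i j
  simp only [jordanBlock, of_apply, Matrix.add_apply, Matrix.smul_apply, one_apply, diagonal_mul,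
    Equiv.Perm.permMatrix, PEquiv.toMatrix_apply, Equiv.toPEquiv_apply, Option.mem_def,
    Option.some_inj, smul_eq_mul, mul_ite, mul_one, mul_zero, ← Fin.ext_iff]
  have hj := j.isLt
  by_cases hi : i = Fin.last n
  · simp only [hi, if_true, ite_self, add_zero]
    split_ifs <;> grind
  · have hrot := coe_finRotate_of_ne_last hi
    simp only [hi, if_false]
    split_ifs <;> grind

lemma diagonal_mul_finRotate_permMatrix_mulVec_pow {R : Type*} [CommRing R] (n : ℕ) (a u : R) :
    (diagonal (fun i : Fin (n + 1) => if i = Fin.last n then a * u ^ (n + 1) else a) *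
        (finRotate (n + 1)).permMatrix R) *ᵥ (fun i => u ^ (i : ℕ)) =
      (a * u) • fun i : Fin (n + 1) => u ^ (i : ℕ) := by
  ext i
  rw [← mulVec_mulVec, permMatrix_mulVec, mulVec_diagonal]
  by_cases hi : i = Fin.last n
  · simp [hi]
    ring
  · simp only [Function.comp_apply, hi, if_false, Pi.smul_apply, smul_eq_mul,
      coe_finRotate_of_ne_last hi]
    ring

lemma jordanBlock_add_diagonal_mul_finRotate_permMatrix_mulVec_pow (n : ℕ) (lam δ u : ℂ) :
    (jordanBlock (n + 1) lam +
        diagonal (fun i => if i = Fin.last n then (1 + δ) * u ^ (n + 1) else δ) *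
          (finRotate (n + 1)).permMatrix ℂ) *ᵥ (fun i => u ^ (i : ℕ)) =
      (lam + (1 + δ) * u) • fun i : Fin (n + 1) => u ^ (i : ℕ) := by
  have hweights : (diagonal fun i : Fin (n + 1) => if i = Fin.last n then (0 : ℂ) else 1) +
      diagonal (fun i => if i = Fin.last n then (1 + δ) * u ^ (n + 1) else δ) =
      diagonal (fun i => if i = Fin.last n then (1 + δ) * u ^ (n + 1) else 1 + δ) := by
    rw [diagonal_add]
    congr 1
    ext i
    split_ifs <;> ring
  rw [jordanBlock_succ, add_assoc, ← add_mul, hweights, add_mulVec, smul_mulVec, one_mulVec,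
    diagonal_mul_finRotate_permMatrix_mulVec_pow, add_smul]

lemma exists_lt_mul_one_add_pow {x ε : ℝ} (n : ℕ) (hε : 0 < ε) (hx : x < ε * (1 + ε) ^ n) :
    ∃ δ, 0 < δ ∧ δ < ε ∧ x < ε * (1 + δ) ^ n := by
  have hcont : ContinuousAt (fun t : ℝ => ε * (1 + t) ^ n) ε := by fun_prop
  have : ∀ᶠ δ in 𝓝[<] ε, 0 < δ ∧ δ < ε ∧ x < ε * (1 + δ) ^ n :=
    (eventually_nhdsWithin_of_eventually_nhds (eventually_gt_nhds hε)).and <|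
      eventually_mem_nhdsWithin.and <|
      eventually_nhdsWithin_of_eventually_nhds (continuousAt_const.eventually_lt hcont hx)
  exact this.exists

lemma norm_one_add_mul_div_one_add_pow_succ {δ : ℝ} (hδ : 0 ≤ δ) (w : ℂ) (n : ℕ) :
    ‖(1 + δ : ℂ) * (w / (1 + δ)) ^ (n + 1)‖ = ‖w‖ ^ (n + 1) / (1 + δ) ^ n := by
  have hnorm : ‖(1 + δ : ℂ)‖ = 1 + δ := by exact_mod_cast Real.norm_of_nonneg (by linarith)
  have : 1 + δ ≠ 0 := by linarith
  simp only [norm_mul, norm_pow, norm_div, hnorm, div_pow, pow_succ]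
  field_simp

theorem ball_subset_pseudospectrum_jordanBlock
    (N : ℕ) (hN : 0 < N) (lam : ℂ) (ε : ℝ) (hε : 0 < ε) (z : ℂ)
    (hz : dist z lam < (ε * (1 + ε) ^ (N - 1)) ^ ((1 : ℝ) / N)) :
    ∃ E : Matrix (Fin N) (Fin N) ℂ, opNorm E < ε ∧
      z ∈ spectrum ℂ (jordanBlock N lam + E) := by
  obtain ⟨n, rfl⟩ : ∃ n, N = n + 1 := ⟨N - 1, by omega⟩
  rw [Nat.add_sub_cancel, Complex.dist_eq, one_div,
    Real.lt_rpow_inv_iff_of_pos (norm_nonneg _) (by positivity) (by positivity),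
    Real.rpow_natCast] at hz
  obtain ⟨δ, hδ, hδε, hδc⟩ := exists_lt_mul_one_add_pow n hε hz
  have h1δ : (1 + δ : ℝ) ≠ 0 := by linarith
  set u : ℂ := (z - lam) / (1 + δ)
  set d : Fin (n + 1) → ℂ := fun i => if i = Fin.last n then (1 + δ) * u ^ (n + 1) else δ
  have hd : ∀ i, ‖d i‖ < ε := by
    intro i
    by_cases hi : i = Fin.last n
    · simp only [d, hi, if_true, u, norm_one_add_mul_div_one_add_pow_succ hδ.le]
      rwa [div_lt_iff₀ (by positivity)]
    · simpa [d, hi, abs_of_pos hδ] using hδε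
  refine ⟨diagonal d * (finRotate (n + 1)).permMatrix ℂ,
    (opNorm_diagonal_mul_permMatrix_le d _).trans_lt ((pi_norm_lt_iff hε).2 hd), ?_⟩
  refine mem_spectrum_of_mulVec_eq_smul (v := fun i : Fin (n + 1) => u ^ (i : ℕ))
    (fun h => by simpa using congrFun h 0) ?_
  rw [jordanBlock_add_diagonal_mul_finRotate_permMatrix_mulVec_pow,
    mul_div_cancel₀ _ (by exact_mod_cast h1δ), add_sub_cancel]
end

section
/- Let J be the N×N Jordan block with eigenvalue λ and let E be the matrix with entries E_{i,i+1} = k for i = 1,…,N−1, E_{N,1} = k, and 0 elsewhere, for some k ∈ ℂ. Then the characteristic polynomial of J + E satisfies det(zI − (J+E)) = (z−λ)^N − k(1+k)^{N−1}, so the eigenvalues of J + E are exactly λ + ζ where ζ ranges over the N-th roots of k(1+k)^{N−1}. -/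
open Matrix

/-- The perturbation with `k` on the superdiagonal and in the bottom-left corner. -/
def cornerPerturbation (N : ℕ) (k : ℂ) : Matrix (Fin N) (Fin N) ℂ :=
  Matrix.of fun i j =>
    if (j : ℕ) = (i : ℕ) + 1 then k
    else if (i : ℕ) = N - 1 ∧ (j : ℕ) = 0 then k else 0

lemma det_tridiag (n : ℕ) (a b c : ℂ) :
    (Matrix.of fun i j : Fin (n+2) =>
      if (j : ℕ) = i then a else if (j : ℕ) = (i : ℕ) + 1 then b
      else if (i : ℕ) = n + 1 ∧ (j : ℕ) = 0 then c else 0).det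
      = a ^ (n+2) + (-1) ^ (n+1) * c * b ^ (n+1) := by
  set M : Matrix (Fin (n+2)) (Fin (n+2)) ℂ := Matrix.of fun i j =>
      if (j : ℕ) = i then a else if (j : ℕ) = (i : ℕ) + 1 then b
      else if (i : ℕ) = n + 1 ∧ (j : ℕ) = 0 then c else 0 with hM
  rw [Matrix.det_succ_column_zero]
  have h0 : (0 : Fin (n+2)) ≠ Fin.last (n+1) := by
    simp [Fin.ext_iff]
  rw [show (Finset.univ : Finset (Fin (n+2))) = insert 0 (insert (Fin.last (n+1))
      ((Finset.univ : Finset (Fin (n+2))) \ {0, Fin.last (n+1)})) from ?_]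
  · rw [Finset.sum_insert, Finset.sum_insert]
    · have hrest : ∀ i ∈ (Finset.univ : Finset (Fin (n+2))) \ {0, Fin.last (n+1)},
          (-1 : ℂ) ^ (i : ℕ) * M i 0 * (M.submatrix i.succAbove Fin.succ).det = 0 := by
        intro i hi
        simp only [Finset.mem_sdiff, Finset.mem_insert, Finset.mem_singleton] at hi
        have h1 : (i : ℕ) ≠ 0 := by
          intro h; exact hi.2 (Or.inl (Fin.ext h))
        have h2 : (i : ℕ) ≠ n + 1 := by
          intro h; exact hi.2 (Or.inr (Fin.ext (by simp [h])))
        have : M i 0 = 0 := by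
          simp only [hM, Matrix.of_apply, Fin.val_zero]
          rw [if_neg (by omega), if_neg (by omega), if_neg (by omega)]
        rw [this]; ring
      rw [Finset.sum_eq_zero hrest, add_zero]
      have hd0 : (M.submatrix (Fin.succAbove 0) Fin.succ).det = a ^ (n+1) := by
        rw [Matrix.det_of_upperTriangular]
        · rw [Finset.prod_congr rfl (fun i _ => ?_), Finset.prod_const, Finset.card_univ,
            Fintype.card_fin]
          simp only [Matrix.submatrix_apply, hM, Matrix.of_apply, Fin.succAbove_zero,
            Fin.val_succ]
          simp
        · intro i j hij
          simp only [Matrix.submatrix_apply, hM, Matrix.of_apply, Fin.succAbove_zero,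
            Fin.val_succ]
          have : (j : ℕ) < i := hij
          rw [if_neg (by omega), if_neg (by omega), if_neg (by omega)]
      have hdl : ((M.submatrix (Fin.last (n+1)).succAbove Fin.succ)).det = b ^ (n+1) := by
        rw [Matrix.det_of_lowerTriangular]
        · rw [Finset.prod_congr rfl (fun i _ => ?_), Finset.prod_const, Finset.card_univ,
            Fintype.card_fin]
          simp only [Matrix.submatrix_apply, hM, Matrix.of_apply, Fin.succAbove_last,
            Fin.val_succ, Fin.coe_castSucc]
          rw [if_neg (by omega)]
          simp
        · intro i j hij
          simp only [Matrix.submatrix_apply, hM, Matrix.of_apply, Fin.succAbove_last,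
            Fin.val_succ, Fin.coe_castSucc]
          have : (i : ℕ) < j := hij
          have hi : (i : ℕ) < n + 1 := i.isLt
          rw [if_neg (by omega), if_neg (by omega), if_neg (by omega)]
      have hM00 : M 0 0 = a := by simp [hM]
      have hMl0 : M (Fin.last (n+1)) 0 = c := by
        simp only [hM, Matrix.of_apply, Fin.val_last, Fin.val_zero]
        rw [if_neg (by omega), if_neg (by omega)]
        simp
      rw [hd0, hdl, hM00, hMl0]
      simp [Fin.val_last]
      ring
    · simp
    · simp [h0]
      try exact fun h => absurd h.symm h0
  · ext i
    simp only [Finset.mem_insert, Finset.mem_sdiff, Finset.mem_univ, Finset.mem_singleton,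
      true_and]
    by_cases h1 : i = 0
    · simp [h1]
    · by_cases h2 : i = Fin.last (n+1) <;> simp [h1, h2]

open Matrix in
theorem charpoly_det (N : ℕ) (hN : 0 < N) (lam k : ℂ) (z : ℂ) :
    (z • (1 : Matrix (Fin N) (Fin N) ℂ) -
      (Matrix.of (fun i j : Fin N => if (j : ℕ) = i then lam else if (j : ℕ) = (i : ℕ) + 1 then 1 else 0) +
       Matrix.of (fun i j : Fin N => if (j : ℕ) = (i : ℕ) + 1 then k
         else if (i : ℕ) = N - 1 ∧ (j : ℕ) = 0 then k else 0))).det =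
      (z - lam) ^ N - k * (1 + k) ^ (N - 1) := by
  match N, hN with
  | 1, _ =>
    rw [Matrix.det_fin_one]
    simp [Matrix.one_apply]
    ring
  | (n+2), _ =>
    have he : (z • (1 : Matrix (Fin (n+2)) (Fin (n+2)) ℂ) -
      (Matrix.of (fun i j : Fin (n+2) => if (j : ℕ) = i then lam else if (j : ℕ) = (i : ℕ) + 1 then 1 else 0) +
       Matrix.of (fun i j : Fin (n+2) => if (j : ℕ) = (i : ℕ) + 1 then k
         else if (i : ℕ) = n + 2 - 1 ∧ (j : ℕ) = 0 then k else 0))) =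
        (Matrix.of fun i j : Fin (n+2) =>
          if (j : ℕ) = i then z - lam else if (j : ℕ) = (i : ℕ) + 1 then -(1+k)
          else if (i : ℕ) = n + 1 ∧ (j : ℕ) = 0 then -k else 0) := by
      ext i j
      simp only [Matrix.sub_apply, Matrix.smul_apply, Matrix.add_apply, Matrix.of_apply,
        smul_eq_mul, Matrix.one_apply]
      split_ifs <;>
        first
          | ring1
          | (exfalso; simp only [Fin.ext_iff] at *; omega)
    rw [he, det_tridiag]
    have h4 : ((-1:ℂ))^(n+1) * ((-1:ℂ))^(n+1) = 1 := by
      rw [← pow_add, show (n+1)+(n+1) = 2*(n+1) from by ring, pow_mul]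
      norm_num
    have : ((-1 : ℂ)) ^ (n+1) * (-k) * (-(1+k)) ^ (n+1) = -(k * (1+k)^(n+1)) := by
      rw [neg_pow (1+k), show ((-1:ℂ))^(n+1) * (-k) * ((-1:ℂ)^(n+1) * (1+k)^(n+1)) =
        ((-1:ℂ)^(n+1) * (-1:ℂ)^(n+1)) * (-k) * (1+k)^(n+1) from by ring, h4]
      ring
    rw [this]
    have : n + 2 - 1 = n + 1 := rfl
    rw [this]
    ring

theorem charpoly_jordanBlock_perturbed (N : ℕ) (hN : 0 < N) (lam k : ℂ) :
    (∀ z : ℂ,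
      (z • (1 : Matrix (Fin N) (Fin N) ℂ) - (jordanBlock N lam + cornerPerturbation N k)).det =
        (z - lam) ^ N - k * (1 + k) ^ (N - 1)) ∧
    (∀ z : ℂ,
      z ∈ spectrum ℂ (jordanBlock N lam + cornerPerturbation N k) ↔
        (z - lam) ^ N = k * (1 + k) ^ (N - 1)) := by
  have hdet : ∀ z : ℂ,
      (z • (1 : Matrix (Fin N) (Fin N) ℂ) - (jordanBlock N lam + cornerPerturbation N k)).det =
        (z - lam) ^ N - k * (1 + k) ^ (N - 1) := fun z =>
    charpoly_det N hN lam k z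
  refine ⟨hdet, fun z => ?_⟩
  rw [spectrum.mem_iff, Matrix.isUnit_iff_isUnit_det, isUnit_iff_ne_zero, not_not,
    Algebra.algebraMap_eq_smul_one, hdet z, sub_eq_zero]
end

section
/- Let A = bidiag({a_k}, {b_k}) be an upper bidiagonal N×N matrix with all b_i ≠ 0, and let a be an eigenvalue of A of algebraic multiplicity m. Then the Jordan form of A has exactly one Jordan block associated to a, of size m, i.e., rank((A − aI)^j) = N − min(j, m) for all j ≥ 0. -/
/-!
Every eigenspace of a bidiagonal matrix with nonzero superdiagonal is at most one-dimensional: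
row `k` of `A x = c x` determines `x (k + 1)` from `x k`, so an eigenvector is fixed by its first
coordinate. Consequently the kernels of the powers of `B = A - a • 1` grow by at most one
dimension per step, and they grow strictly until they fill the generalized eigenspace, whose
dimension is the algebraic multiplicity `m`; for a triangular matrix that is the number of
diagonal entries equal to `a`. Hence `dim ker B ^ j = min j m`, and rank–nullity gives the rank.
-/

open Matrix Polynomial Module

namespace Module.End

variable {K V : Type*} [Field K] [AddCommGroup V] [Module K V] [FiniteDimensional K V]
  (f : End K V) (μ : K)

lemma finrank_genEigenspace_succ_le (k : ℕ) :
    finrank K (f.genEigenspace μ (k + 1 : ℕ)) ≤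
      finrank K (f.eigenspace μ) + finrank K (f.genEigenspace μ k) := by
  have hcomap :
      f.genEigenspace μ (k + 1 : ℕ) = (f.eigenspace μ).comap ((f - μ • 1) ^ k) := by
    rw [genEigenspace_nat, pow_succ', mul_eq_comp, LinearMap.ker_comp, eigenspace_def]
  have h := LinearMap.lift_rank_comap_le (f := (f - μ • 1) ^ k) (f.eigenspace μ)
  simp only [Cardinal.lift_id, ← finrank_eq_rank] at h
  rw [← hcomap, ← genEigenspace_nat] at h
  exact_mod_cast h

lemma finrank_genEigenspace_lt_succ_of_lt_rootMultiplicity {k : ℕ}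
    (hk : finrank K (f.genEigenspace μ k) < f.charpoly.rootMultiplicity μ) :
    finrank K (f.genEigenspace μ k) < finrank K (f.genEigenspace μ (k + 1 : ℕ)) := by
  by_contra! hle
  have hstable : LinearMap.ker ((f - μ • 1) ^ k) = LinearMap.ker ((f - μ • 1) ^ k.succ) := by
    simp only [← genEigenspace_nat]
    exact Submodule.eq_of_le_of_finrank_le ((f.genEigenspace μ).monotone (by simp)) hle
  have hmax : f.genEigenspace μ k = f.maxGenEigenspace μ := by
    rw [maxGenEigenspace_eq_genEigenspace_finrank,
      ← genEigenspace_eq_genEigenspace_finrank_of_le f μ (Nat.le_add_left _ k),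
      genEigenspace_nat, genEigenspace_nat, ← ker_pow_constant hstable]
  rw [hmax, LinearMap.finrank_maxGenEigenspace_eq] at hk
  exact lt_irrefl _ hk

theorem finrank_genEigenspace_eq_min_rootMultiplicity (h : finrank K (f.eigenspace μ) ≤ 1)
    (k : ℕ) : finrank K (f.genEigenspace μ k) = min k (f.charpoly.rootMultiplicity μ) := by
  induction k with
  | zero => simp
  | succ k ih =>
    have hsucc := finrank_genEigenspace_succ_le f μ k
    have hmono :
        finrank K (f.genEigenspace μ k) ≤ finrank K (f.genEigenspace μ (k + 1 : ℕ)) :=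
      Submodule.finrank_mono ((f.genEigenspace μ).monotone (by simp))
    have hbound := LinearMap.finrank_genEigenspace_le f μ (k + 1)
    rcases lt_or_ge (finrank K (f.genEigenspace μ k)) (f.charpoly.rootMultiplicity μ) with
      hlt | hge
    · have := finrank_genEigenspace_lt_succ_of_lt_rootMultiplicity f μ hlt
      omega
    · omega

end Module.End

namespace Matrix

open Finset in
lemma rootMultiplicity_charpoly_of_isUpperTriangular {n R : Type*} [Fintype n] [LinearOrder n]
    [CommRing R] [IsDomain R] [DecidableEq R] (M : Matrix n n R) (hM : M.IsUpperTriangular)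
    (a : R) : M.charpoly.rootMultiplicity a = #{i | M i i = a} := by
  have hprod : ∏ i, (X - C (M i i)) =
      ((univ.val.map fun i => M i i).map fun d => X - C d).prod := by
    rw [Multiset.map_map, Finset.prod_eq_multiset_prod]
    rfl
  rw [charpoly_of_isUpperTriangular M hM, ← count_roots, hprod, roots_multiset_prod_X_sub_C,
    Multiset.count_map]
  simp [Finset.card_def, Finset.filter_val, eq_comm]

lemma rank_add_finrank_ker_toLin' {n K : Type*} [Fintype n] [DecidableEq n] [Field K]
    (M : Matrix n n K) : M.rank + finrank K (LinearMap.ker (toLin' M)) = Fintype.card n := by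
  rw [Matrix.rank, ← toLin'_apply', LinearMap.finrank_range_add_finrank_ker,
    finrank_fintype_fun_eq_card]

variable {K : Type*} [Field K] {N : ℕ} (A : Matrix (Fin N) (Fin N) K)

lemma eq_zero_of_mulVec_eq_smul_of_bidiagonal
    (hbd : ∀ i j : Fin N, (j : ℕ) ≠ i → (j : ℕ) ≠ i + 1 → A i j = 0)
    (hb : ∀ i j : Fin N, (j : ℕ) = i + 1 → A i j ≠ 0)
    {c : K} {x : Fin N → K} (hx : A *ᵥ x = c • x) (hN : 0 < N) (h0 : x ⟨0, hN⟩ = 0) :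
    x = 0 := by
  suffices ∀ k (hk : k < N), x ⟨k, hk⟩ = 0 from funext fun i => this i i.2
  intro k
  induction k with
  | zero => exact fun _ => h0
  | succ k ih =>
    intro hk
    have hxk := ih (by omega)
    have hrow := congrFun hx ⟨k, by omega⟩
    rw [Pi.smul_apply, hxk, smul_zero, mulVec, dotProduct,
      Fintype.sum_eq_single ⟨k + 1, hk⟩] at hrow
    · exact (mul_eq_zero.mp hrow).resolve_left (hb _ _ rfl)
    · intro j hj
      by_cases hjk : (j : ℕ) = k
      · rw [show j = ⟨k, by omega⟩ from Fin.ext hjk, hxk, mul_zero]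
      · rw [hbd _ _ hjk (fun h => hj (Fin.ext h)), zero_mul]

lemma finrank_eigenspace_toLin'_le_one_of_bidiagonal
    (hbd : ∀ i j : Fin N, (j : ℕ) ≠ i → (j : ℕ) ≠ i + 1 → A i j = 0)
    (hb : ∀ i j : Fin N, (j : ℕ) = i + 1 → A i j ≠ 0) (c : K) :
    finrank K (Module.End.eigenspace (toLin' A) c) ≤ 1 := by
  rcases Nat.eq_zero_or_pos N with rfl | hN
  · exact (Submodule.finrank_le _).trans (by simp)
  · let ev : Module.End.eigenspace (toLin' A) c →ₗ[K] K :=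
      (LinearMap.proj ⟨0, hN⟩).comp (Submodule.subtype _)
    have hev : Function.Injective ev := by
      rw [injective_iff_map_eq_zero]
      rintro ⟨x, hx⟩ h0
      rw [Module.End.mem_eigenspace_iff, toLin'_apply] at hx
      exact Subtype.ext (eq_zero_of_mulVec_eq_smul_of_bidiagonal A hbd hb hx hN h0)
    simpa using LinearMap.finrank_le_finrank_of_injective hev

end Matrix

theorem bidiagonal_single_jordan_block_general {N : ℕ}
    (A : Matrix (Fin N) (Fin N) ℂ)
    -- A is upper bidiagonal:
    (hbd : ∀ i j : Fin N, (j : ℕ) ≠ (i : ℕ) → (j : ℕ) ≠ (i : ℕ) + 1 → A i j = 0)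
    -- all superdiagonal entries are nonzero:
    (hb : ∀ i j : Fin N, (j : ℕ) = (i : ℕ) + 1 → A i j ≠ 0)
    (a : ℂ)
    (m : ℕ) (hm : m = Set.ncard {i : Fin N | A i i = a}) :
    ∀ j : ℕ, ((A - a • (1 : Matrix (Fin N) (Fin N) ℂ)) ^ j).rank = N - min j m := by
  classical
  intro j
  have hupper : A.IsUpperTriangular := fun i j (hji : j < i) => hbd i j (by omega) (by omega)
  have hmult : m = A.charpoly.rootMultiplicity a := by
    rw [hm, rootMultiplicity_charpoly_of_isUpperTriangular A hupper, Set.ncard_eq_toFinset_card',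
      Set.toFinset_ofPred]
  have hker :
      LinearMap.ker (toLin' ((A - a • 1) ^ j)) = Module.End.genEigenspace (toLin' A) a j := by
    rw [Module.End.genEigenspace_nat, toLin'_pow, map_sub, map_smul, toLin'_one,
      Module.End.one_eq_id]
  have hrank := rank_add_finrank_ker_toLin' ((A - a • 1) ^ j)
  rw [hker, Module.End.finrank_genEigenspace_eq_min_rootMultiplicity _ _
      (finrank_eigenspace_toLin'_le_one_of_bidiagonal A hbd hb a),
    charpoly_toLin', ← hmult, Fintype.card_fin] at hrank
  omega

theorem bidiagonal_single_jordan_block {N : ℕ}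
    (A : Matrix (Fin N) (Fin N) ℂ)
    -- A is upper bidiagonal:
    (hbd : ∀ i j : Fin N, (j : ℕ) ≠ (i : ℕ) → (j : ℕ) ≠ (i : ℕ) + 1 → A i j = 0)
    -- all superdiagonal entries are nonzero:
    (hb : ∀ i j : Fin N, (j : ℕ) = (i : ℕ) + 1 → A i j ≠ 0)
    (a : ℂ) (ha : ∃ i : Fin N, A i i = a)
    (m : ℕ) (hm : m = Set.ncard {i : Fin N | A i i = a}) :
    ∀ j : ℕ, ((A - a • (1 : Matrix (Fin N) (Fin N) ℂ)) ^ j).rank = N - min j m :=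
  bidiagonal_single_jordan_block_general A hbd hb a m hm
end

section
/- Let V be a Hilbert space and A : V → V a bounded operator of finite rank m. Then there exist constants C > 0 and ε₀ > 0 such that for all 0 < ε < ε₀, σ_ε(A) ⊆ σ(A) + B(0, C·ε^{1/(m+1)}). -/
/-!
If a monic polynomial `P` annihilates `a`, then `(z - a) N(z) = P(z)` for the divided difference
`N(z)` of `P` at `z` and `a`, so the resolvent is `N(z) / P(z)`. A resolvent of norm at least one
confines `z` to a ball, on which `N` is bounded by some `K`; hence `‖(z - a)⁻¹‖ > 1/ε` forces
`|P(z)| < K ε`, and some root `w` of `P` has `|z - w| ^ deg P ≤ |P(z)|`. For `P` the minimal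
polynomial the roots lie in the spectrum. An operator `A` of rank `m` is annihilated by `χ X`, with
`χ` the characteristic polynomial of `A` restricted to its range, so its minimal polynomial has
degree at most `m + 1`.
-/

open Polynomial

theorem spectrum.mem_of_isRoot_minpoly {K A : Type*} [Field K] [Ring A] [Algebra K A] {a : A}
    (ha : IsIntegral K a) {μ : K} (hμ : (minpoly K a).IsRoot μ) : μ ∈ spectrum K a := by
  rw [spectrum.mem_iff]
  intro hunit
  set q := minpoly K a /ₘ (X - C μ)
  have hfac : (X - C μ) * q = minpoly K a := mul_divByMonic_eq_iff_isRoot.mpr hμ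
  have hq : aeval a q = 0 := by
    have h := minpoly.aeval K a
    rw [← hfac, map_mul, map_sub, aeval_X, aeval_C, ← neg_sub] at h
    exact hunit.neg.mul_right_eq_zero.mp h
  have hq0 : q ≠ 0 := by
    rintro h
    rw [h, mul_zero] at hfac
    exact minpoly.ne_zero ha hfac.symm
  have hle := minpoly.degree_le_of_ne_zero K a hq0 hq
  rw [← hfac, degree_mul, degree_X_sub_C, degree_eq_natDegree hq0] at hle
  norm_cast at hle
  omega

theorem Module.End.aeval_restrict_apply {R M : Type*} [CommRing R] [AddCommGroup M] [Module R M]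
    {f : Module.End R M} {p : Submodule R M} (h : ∀ x ∈ p, f x ∈ p) (q : R[X]) (x : p) :
    (aeval (f.restrict h) q x : M) = aeval f q x := by
  induction q using Polynomial.induction_on' with
  | add p q hp hq => simp [hp, hq]
  | monomial n c => simp [Module.End.pow_restrict n h, LinearMap.restrict_apply]

theorem Module.End.exists_monic_aeval_eq_zero_of_finiteDimensional_range {K V : Type*} [Field K]
    [AddCommGroup V] [Module K V] (f : Module.End K V) [FiniteDimensional K (LinearMap.range f)] :
    ∃ P : K[X], P.Monic ∧ P.natDegree = Module.finrank K (LinearMap.range f) + 1 ∧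
      aeval f P = 0 := by
  have hf : ∀ x ∈ LinearMap.range f, f x ∈ LinearMap.range f :=
    fun x _ ↦ LinearMap.mem_range_self f x
  set g := f.restrict hf
  refine ⟨g.charpoly * X, g.charpoly_monic.mul monic_X, ?_, ?_⟩
  · rw [g.charpoly_monic.natDegree_mul monic_X, natDegree_X, LinearMap.charpoly_natDegree]
  · ext v
    have hg := Module.End.aeval_restrict_apply hf g.charpoly ⟨f v, LinearMap.mem_range_self f v⟩
    rw [LinearMap.aeval_self_charpoly] at hg
    simpa [map_mul, Module.End.mul_apply] using hg.symm

theorem ContinuousLinearMap.toLinearMap_aeval {𝕜 V : Type*} [NormedField 𝕜]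
    [NormedAddCommGroup V] [NormedSpace 𝕜 V] (A : V →L[𝕜] V) (p : 𝕜[X]) :
    ((aeval A p : V →L[𝕜] V) : V →ₗ[𝕜] V) = aeval (A : V →ₗ[𝕜] V) p := by
  induction p using Polynomial.induction_on' with
  | add p q hp hq => simp [hp, hq]
  | monomial n c => simp; rfl

theorem ContinuousLinearMap.exists_monic_aeval_eq_zero_of_finiteDimensional_range {𝕜 V : Type*}
    [NormedField 𝕜] [NormedAddCommGroup V] [NormedSpace 𝕜 V] (A : V →L[𝕜] V)
    [FiniteDimensional 𝕜 (LinearMap.range (A : V →ₗ[𝕜] V))] :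
    ∃ P : 𝕜[X], P.Monic ∧
      P.natDegree = Module.finrank 𝕜 (LinearMap.range (A : V →ₗ[𝕜] V)) + 1 ∧
      aeval A P = 0 := by
  obtain ⟨P, hP, hdeg, hPA⟩ :=
    Module.End.exists_monic_aeval_eq_zero_of_finiteDimensional_range (A : V →ₗ[𝕜] V)
  exact ⟨P, hP, hdeg, coe_injective (by rw [toLinearMap_aeval, hPA]; rfl)⟩

section ResolventNumerator

variable {R A : Type*} [CommRing R] [Ring A] [Algebra R A]

/-- `(P(z) - P(X)) / (z - X)`, evaluated at `X = a`. -/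
noncomputable def Polynomial.resolventNumerator (P : R[X]) (a : A) (z : R) : A :=
  ∑ i ∈ Finset.range (P.natDegree + 1),
    P.coeff i • ∑ j ∈ Finset.range i, algebraMap R A z ^ j * a ^ (i - 1 - j)

theorem Polynomial.sum_coeff_smul_pow_sub (P : R[X]) (a : A) (z : R) :
    ∑ i ∈ Finset.range (P.natDegree + 1), P.coeff i • (algebraMap R A z ^ i - a ^ i) =
      algebraMap R A (P.eval z) - aeval a P := by
  simp only [smul_sub, Finset.sum_sub_distrib, ← aeval_eq_sum_range, aeval_algebraMap_apply,
    coe_aeval_eq_eval]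

theorem Polynomial.sub_mul_resolventNumerator (P : R[X]) (a : A) (z : R) :
    (algebraMap R A z - a) * P.resolventNumerator a z =
      algebraMap R A (P.eval z) - aeval a P := by
  rw [resolventNumerator, Finset.mul_sum]
  simp_rw [mul_smul_comm, (Algebra.commute_algebraMap_left z a).mul_geom_sum₂,
    sum_coeff_smul_pow_sub]

theorem Polynomial.resolventNumerator_mul_sub (P : R[X]) (a : A) (z : R) :
    P.resolventNumerator a z * (algebraMap R A z - a) =
      algebraMap R A (P.eval z) - aeval a P := by
  rw [resolventNumerator, Finset.sum_mul]
  simp_rw [smul_mul_assoc, (Algebra.commute_algebraMap_left z a).geom_sum₂_mul,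
    sum_coeff_smul_pow_sub]

end ResolventNumerator

theorem Polynomial.continuous_resolventNumerator {𝕜 A : Type*} [NormedField 𝕜] [NormedRing A]
    [NormedAlgebra 𝕜 A] (P : 𝕜[X]) (a : A) : Continuous (P.resolventNumerator a) := by
  unfold resolventNumerator
  fun_prop

theorem Polynomial.resolvent_eq_inv_smul_resolventNumerator {K A : Type*} [Field K] [Ring A]
    [Algebra K A] {P : K[X]} {a : A} (hPa : aeval a P = 0) {z : K} (hz : P.eval z ≠ 0) :
    z ∈ resolventSet K a ∧ resolvent a z = (P.eval z)⁻¹ • P.resolventNumerator a z := by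
  have hinv : ∀ x : A, x = algebraMap K A (P.eval z) → (P.eval z)⁻¹ • x = 1 := by
    rintro x rfl
    rw [Algebra.smul_def, ← map_mul, inv_mul_cancel₀ hz, map_one]
  let u : Aˣ :=
    { val := algebraMap K A z - a
      inv := (P.eval z)⁻¹ • P.resolventNumerator a z
      val_inv := by
        rw [mul_smul_comm, sub_mul_resolventNumerator, hPa, sub_zero, hinv _ rfl]
      inv_val := by
        rw [smul_mul_assoc, resolventNumerator_mul_sub, hPa, sub_zero, hinv _ rfl] }
  exact ⟨u.isUnit, Ring.inverse_unit u⟩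

theorem norm_le_of_one_le_norm_resolvent {𝕜 A : Type*} [NormedField 𝕜] [NormedRing A]
    [NormedAlgebra 𝕜 A] {a : A} {z : 𝕜} (hz : z ∈ resolventSet 𝕜 a)
    (hR : 1 ≤ ‖resolvent a z‖) : ‖z‖ ≤ ‖a‖ + ‖(1 : A)‖ := by
  set R := resolvent a z
  have hzR : z • R = 1 + R * a := by
    have h : R * (algebraMap 𝕜 A z - a) = 1 := Ring.inverse_mul_cancel _ hz
    rw [mul_sub, ← Algebra.commutes, ← Algebra.smul_def] at h
    rw [← h, sub_add_cancel]
  have h : ‖z‖ * ‖R‖ ≤ (‖a‖ + ‖(1 : A)‖) * ‖R‖ := calc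
    ‖z‖ * ‖R‖ = ‖1 + R * a‖ := by rw [← norm_smul, hzR]
    _ ≤ ‖(1 : A)‖ + ‖R‖ * ‖a‖ := norm_add_le_of_le le_rfl (norm_mul_le R a)
    _ ≤ (‖a‖ + ‖(1 : A)‖) * ‖R‖ := by nlinarith [norm_nonneg (1 : A)]
  exact le_of_mul_le_mul_right h (by linarith)

theorem Polynomial.exists_mem_roots_norm_sub_pow_le_norm_eval {P : ℂ[X]} (hP : P.Monic)
    (hdeg : 0 < P.natDegree) (z : ℂ) :
    ∃ w ∈ P.roots, ‖z - w‖ ^ P.natDegree ≤ ‖P.eval z‖ := by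
  have hsplit : P.Splits := IsAlgClosed.splits P
  have hcard : P.roots.card = P.natDegree := splits_iff_card_roots.mp hsplit
  obtain ⟨w, hw, hmin⟩ := P.roots.toFinset.exists_min_image (fun a ↦ ‖z - a‖)
    (Multiset.toFinset_nonempty.mpr (Multiset.card_pos.mp (hcard ▸ hdeg)))
  refine ⟨w, Multiset.mem_toFinset.mp hw, ?_⟩
  have hnorm : ‖P.eval z‖ = (P.roots.map (‖z - ·‖)).prod := by
    rw [hsplit.eval_eq_prod_roots_of_monic hP, ← normHom_apply, map_multiset_prod,
      Multiset.map_map]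
    rfl
  calc ‖z - w‖ ^ P.natDegree = (P.roots.map fun _ ↦ ‖z - w‖).prod := by
        rw [Multiset.map_const', Multiset.prod_replicate, hcard]
    _ ≤ ‖P.eval z‖ := hnorm ▸ Multiset.prod_map_le_prod_map₀ _ _
        (fun _ _ ↦ norm_nonneg _) fun v hv ↦ hmin v (Multiset.mem_toFinset.mpr hv)

section Pseudospectrum

variable {A : Type*} [NormedRing A] [NormedAlgebra ℂ A]

/-- `Ring.inverse` is `0` at non-units, so the spectrum is added explicitly. -/
def pseudospectrum (a : A) (ε : ℝ) : Set ℂ :=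
  {z | z ∈ spectrum ℂ a ∨ 1 / ε < ‖resolvent a z‖}

theorem pseudospectrum_subset_thickening_spectrum {a : A} {P : ℂ[X]} (hP : P.Monic)
    (hPa : aeval a P = 0) {n : ℕ} (hn : P.natDegree ≤ n) :
    ∃ C > 0, ∀ ε : ℝ, 0 < ε → ε < 1 →
      pseudospectrum a ε ⊆ Metric.thickening (C * ε ^ ((1 : ℝ) / n)) (spectrum ℂ a) := by
  have ha : IsIntegral ℂ a := ⟨P, hP, hPa⟩
  set Q := minpoly ℂ a
  set d := Q.natDegree
  have hdn : d ≤ n := (natDegree_le_natDegree (minpoly.min ℂ a hP hPa)).trans hn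
  obtain ⟨K, hK⟩ :=
    (isCompact_closedBall (0 : ℂ) (‖a‖ + ‖(1 : A)‖)).exists_bound_of_continuousOn
      (continuous_resolventNumerator Q a).continuousOn
  set K' := max K 1
  refine ⟨K' ^ ((1 : ℝ) / d), by positivity, fun ε hε hε1 z hz ↦ ?_⟩
  rw [Metric.mem_thickening_iff]
  by_cases hQz : Q.eval z = 0
  · exact ⟨z, spectrum.mem_of_isRoot_minpoly ha hQz, by rw [dist_self]; positivity⟩
  obtain ⟨hres, hR⟩ := resolvent_eq_inv_smul_resolventNumerator (minpoly.aeval ℂ a) hQz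
  have hRε : 1 / ε < ‖resolvent a z‖ := hz.resolve_left (· hres)
  have hNK : ‖Q.resolventNumerator a z‖ ≤ K' := by
    have h1 : 1 ≤ ‖resolvent a z‖ := (one_le_one_div hε hε1.le).trans hRε.le
    refine (hK z ?_).trans (le_max_left _ _)
    simpa using norm_le_of_one_le_norm_resolvent hres h1
  have hQzε : ‖Q.eval z‖ < K' * ε := by
    rw [hR, norm_smul, norm_inv, inv_mul_eq_div] at hRε
    have := hRε.trans_le (div_le_div_of_nonneg_right hNK (norm_nonneg _))
    rwa [div_lt_div_iff₀ hε (norm_pos_iff.mpr hQz), one_mul] at this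
  have : Nontrivial A := nontrivial_of_ne (resolvent a z) 0 (by
    rintro h; rw [h, norm_zero] at hRε; exact (one_div_pos.mpr hε).not_gt hRε)
  have hd : 0 < d := minpoly.natDegree_pos ha
  obtain ⟨w, hw, hzw⟩ := exists_mem_roots_norm_sub_pow_le_norm_eval (minpoly.monic ha) hd z
  refine ⟨w, spectrum.mem_of_isRoot_minpoly ha (isRoot_of_mem_roots hw), ?_⟩
  calc dist z w < (K' * ε) ^ ((1 : ℝ) / d) := by
        rw [dist_eq_norm, one_div, Real.lt_rpow_inv_iff_of_pos (norm_nonneg _) (by positivity)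
          (by positivity), Real.rpow_natCast]
        exact hzw.trans_lt hQzε
    _ = K' ^ ((1 : ℝ) / d) * ε ^ ((1 : ℝ) / d) := Real.mul_rpow (by positivity) hε.le
    _ ≤ K' ^ ((1 : ℝ) / d) * ε ^ ((1 : ℝ) / n) := by
        refine mul_le_mul_of_nonneg_left (Real.rpow_le_rpow_of_exponent_ge hε hε1.le ?_)
          (by positivity)
        exact one_div_le_one_div_of_le (by positivity) (by exact_mod_cast hdn)

end Pseudospectrum

theorem pseudospectrum_finite_rank_operator_general
    {V : Type*} [NormedAddCommGroup V] [InnerProductSpace ℂ V]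
    (A : V →L[ℂ] V) (m : ℕ)
    (hfin : FiniteDimensional ℂ (LinearMap.range (A : V →ₗ[ℂ] V)))
    (hm : Module.finrank ℂ (LinearMap.range (A : V →ₗ[ℂ] V)) = m) :
    ∃ C > (0 : ℝ), ∃ ε₀ > (0 : ℝ), ∀ ε : ℝ, 0 < ε → ε < ε₀ →
      ∀ z : ℂ,
        (¬ IsUnit (z • (1 : V →L[ℂ] V) - A) ∨
          ‖Ring.inverse (z • (1 : V →L[ℂ] V) - A)‖ > 1 / ε) →
        ∃ w ∈ spectrum ℂ A, dist z w < C * ε ^ ((1 : ℝ) / (m + 1)) := by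
  obtain ⟨P, hP, hdeg, hPA⟩ := A.exists_monic_aeval_eq_zero_of_finiteDimensional_range
  obtain ⟨C, hC, hsub⟩ := pseudospectrum_subset_thickening_spectrum hP hPA (hm ▸ hdeg).le
  refine ⟨C, hC, 1, one_pos, fun ε hε hε1 z hz ↦ ?_⟩
  rw [← Algebra.algebraMap_eq_smul_one, ← spectrum.mem_iff] at hz
  simpa using Metric.mem_thickening_iff.mp (hsub ε hε hε1 hz)

theorem pseudospectrum_finite_rank_operator
    {V : Type*} [NormedAddCommGroup V] [InnerProductSpace ℂ V] [CompleteSpace V]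
    (A : V →L[ℂ] V) (m : ℕ)
    (hfin : FiniteDimensional ℂ (LinearMap.range (A : V →ₗ[ℂ] V)))
    (hm : Module.finrank ℂ (LinearMap.range (A : V →ₗ[ℂ] V)) = m) :
    ∃ C > (0 : ℝ), ∃ ε₀ > (0 : ℝ), ∀ ε : ℝ, 0 < ε → ε < ε₀ →
      ∀ z : ℂ,
        (¬ IsUnit (z • (1 : V →L[ℂ] V) - A) ∨
          ‖Ring.inverse (z • (1 : V →L[ℂ] V) - A)‖ > 1 / ε) →
        ∃ w ∈ spectrum ℂ A, dist z w < C * ε ^ ((1 : ℝ) / (m + 1)) :=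
  pseudospectrum_finite_rank_operator_general A m hfin hm
end
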